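/- arXiv:math/0410472 — 5 statements merged into one kernel-verified Lean document; each statement's English description precedes it below -/
import Mathlib

section
/- Let (S^p, Σ, A) be a spherical system with set of colours Δ and let Δ' ⊂ Δ be a distinguished subset. If Δ' is smooth, i.e. dim V(Δ') equals the dimension of the face V(Δ') ∩ 𝒱 of the valuation cone 𝒱, then Δ' has the *-property: Σ/Δ' = Σ \ Σ(Δ') is a subset of Σ and is a basis of the lattice Ξ/Δ'. -/
/-!
STATEMENT 1: Let `(S^p, Σ, A)` be a spherical system with set of colours `Δ` and
`Δ' ⊆ Δ` a distinguished subset.  If `Δ'` is smooth then `Δ'` has the *-property: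
`Σ/Δ' = Σ \ Σ(Δ')` is a subset of `Σ` and is a basis of the lattice `Ξ/Δ'`.

We work in coordinates with respect to the basis `Σ` of `Ξ`: spherical roots are
indexed by a finite type `σ`, and the functional `ρ(δ)` of a colour `δ` is recorded by
its values `ρ δ : σ → ℚ` on the spherical roots.  An element `ξ = Σ a_γ γ` of
`ℚ ⊗ Ξ` is recorded by its coordinate vector `a : σ → ℚ`; the dual basis vector
`γ_i^*` is `Pi.single i 1`.
-/

namespace Stmt1

variable {σ Δ : Type*} [Fintype σ] [DecidableEq σ] [Fintype Δ]

/-- the functional `φ = Σ_{δ ∈ Δ'} c_δ ρ(δ)` -/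
def phi (ρ : Δ → σ → ℚ) (D : Finset Δ) (cc : Δ → ℚ) : σ → ℚ :=
  fun i => ∑ δ ∈ D, cc δ * ρ δ i

/-- `Δ'` is distinguished: some positive combination of the `ρ(δ)`, `δ ∈ Δ'`, is
nonnegative on all spherical roots -/
def Distinguished (ρ : Δ → σ → ℚ) (D : Finset Δ) : Prop :=
  ∃ cc : Δ → ℚ, (∀ δ ∈ D, 0 < cc δ) ∧ ∀ i, 0 ≤ phi ρ D cc i

/-- `Σ(Δ')`: the maximal subset of spherical roots on which some admissible positive
combination `φ` is strictly positive -/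
def SigmaSet (ρ : Δ → σ → ℚ) (D : Finset Δ) : Set σ :=
  {i | ∃ cc : Δ → ℚ, (∀ δ ∈ D, 0 < cc δ) ∧ (∀ j, 0 ≤ phi ρ D cc j) ∧ 0 < phi ρ D cc i}

/-- the dual basis vector `γ_i^*` of `Σ` -/
def dualBasisVec (i : σ) : σ → ℚ := Pi.single i 1

/-- the subspace `V(Δ') = ⟨ρ(Δ') ∪ {γ^* : γ ∈ Σ(Δ')}⟩` -/
def VD (ρ : Δ → σ → ℚ) (D : Finset Δ) : Submodule ℚ (σ → ℚ) :=
  Submodule.span ℚ ((fun δ => ρ δ) '' ↑D ∪ dualBasisVec '' SigmaSet ρ D)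

/-- `Δ'` is smooth: `V(Δ') = ⟨γ^* : γ ∈ Σ(Δ')⟩` -/
def Smooth (ρ : Δ → σ → ℚ) (D : Finset Δ) : Prop :=
  VD ρ D = Submodule.span ℚ (dualBasisVec '' SigmaSet ρ D)

/-- `Ξ/Δ' = {ξ : ⟨v,ξ⟩ = 0 ∀ v ∈ V(Δ')}` (rational coordinates) -/
def XiQuotSet (ρ : Δ → σ → ℚ) (D : Finset Δ) : Set (σ → ℚ) :=
  {ξ | ∀ v ∈ VD ρ D, ∑ i, v i * ξ i = 0}

/-- the semigroup of nonnegative (integral) combinations of `Σ` lying in `Ξ/Δ'` -/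
def Sem (ρ : Δ → σ → ℚ) (D : Finset Δ) : Set (σ → ℚ) :=
  {ξ | (∀ i, ∃ m : ℕ, ξ i = m) ∧ ξ ∈ XiQuotSet ρ D}

/-- `Σ/Δ'`: the indecomposable elements of that semigroup -/
def SigmaQuot (ρ : Δ → σ → ℚ) (D : Finset Δ) : Set (σ → ℚ) :=
  {ξ | ξ ∈ Sem ρ D ∧ ξ ≠ 0 ∧
    ∀ a ∈ Sem ρ D, ∀ b ∈ Sem ρ D, ξ = a + b → a = 0 ∨ b = 0}

set_option linter.unusedSectionVars false

section Proof

variable {σ Δ : Type*} [Fintype σ] [DecidableEq σ] [Fintype Δ]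

lemma pairing_dual (ξ : σ → ℚ) (j : σ) :
    ∑ i, dualBasisVec j i * ξ i = ξ j := by
  simp [dualBasisVec, Pi.single_apply, ite_mul]

lemma xiquot_eq (ρ : Δ → σ → ℚ) (D : Finset Δ) (hs : Smooth ρ D) :
    XiQuotSet ρ D = {ξ | ∀ j ∈ SigmaSet ρ D, ξ j = 0} := by
  ext ξ
  constructor
  · intro h j hj
    have hv : dualBasisVec j ∈ VD ρ D := by
      rw [hs]; exact Submodule.subset_span ⟨j, hj, rfl⟩
    have := h _ hv
    rwa [pairing_dual] at this
  · intro h v hv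
    rw [hs] at hv
    induction hv using Submodule.span_induction with
    | mem x hx =>
      obtain ⟨j, hj, rfl⟩ := hx
      rw [pairing_dual]; exact h j hj
    | zero => simp
    | add x y hx hy ihx ihy => simp [add_mul, Finset.sum_add_distrib, ihx, ihy]
    | smul a x hx ih =>
      simp only [Pi.smul_apply, smul_eq_mul, mul_assoc, ← Finset.mul_sum, ih, mul_zero]

lemma dual_mem_sem (ρ : Δ → σ → ℚ) (D : Finset Δ) (hs : Smooth ρ D)
    {i : σ} (hi : i ∉ SigmaSet ρ D) : dualBasisVec i ∈ Sem ρ D := by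
  constructor
  · intro j
    by_cases h : j = i
    · exact ⟨1, by subst h; simp [dualBasisVec]⟩
    · exact ⟨0, by simp [dualBasisVec, Pi.single_apply, h]⟩
  · rw [xiquot_eq ρ D hs]
    intro j hj
    have : j ≠ i := fun h => hi (h ▸ hj)
    simp [dualBasisVec, Pi.single_apply, this]

lemma sem_nonneg (ρ : Δ → σ → ℚ) (D : Finset Δ) {ξ : σ → ℚ}
    (h : ξ ∈ Sem ρ D) (j : σ) : 0 ≤ ξ j := by
  obtain ⟨m, hm⟩ := h.1 j
  rw [hm]; exact_mod_cast Nat.zero_le m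

lemma sigmaQuot_eq (ρ : Δ → σ → ℚ) (D : Finset Δ) (hs : Smooth ρ D) :
    SigmaQuot ρ D = dualBasisVec '' (SigmaSet ρ D)ᶜ := by
  ext ξ
  constructor
  · rintro ⟨hsem, hne, hind⟩
    -- find i with ξ i ≠ 0
    have : ∃ i, ξ i ≠ 0 := by
      by_contra h
      push_neg at h
      exact hne (funext h)
    obtain ⟨i, hi⟩ := this
    have hvanish : ∀ j ∈ SigmaSet ρ D, ξ j = 0 := by
      have h2 := hsem.2; rw [xiquot_eq ρ D hs] at h2; exact h2
    have hiS : i ∉ SigmaSet ρ D := fun h => hi (hvanish i h)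
    refine ⟨i, hiS, ?_⟩
    -- show ξ = dualBasisVec i via indecomposability
    obtain ⟨m, hm⟩ := hsem.1 i
    have hm1 : 1 ≤ m := by
      rcases Nat.eq_zero_or_pos m with h0 | h1
      · exact absurd (by rw [hm, h0]; norm_num) hi
      · exact h1
    have hbsem : ξ - dualBasisVec i ∈ Sem ρ D := by
      constructor
      · intro j
        by_cases h : j = i
        · refine ⟨m - 1, ?_⟩
          subst h
          rw [Pi.sub_apply, hm]
          simp [dualBasisVec, Nat.cast_sub hm1]
        · obtain ⟨n, hn⟩ := hsem.1 j
          exact ⟨n, by simp [dualBasisVec, Pi.single_apply, h, hn]⟩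
      · rw [xiquot_eq ρ D hs]
        intro j hj
        have hji : j ≠ i := fun h => hiS (h ▸ hj)
        simp [hvanish j hj, dualBasisVec, Pi.single_apply, hji]
    have := hind (dualBasisVec i) (dual_mem_sem ρ D hs hiS) (ξ - dualBasisVec i) hbsem
      (by ring)
    rcases this with h | h
    · exact absurd (congrFun h i) (by simp [dualBasisVec])
    · have := sub_eq_zero.mp h
      exact this.symm
  · rintro ⟨i, hi, rfl⟩
    refine ⟨dual_mem_sem ρ D hs hi, ?_, ?_⟩
    · intro h
      have := congrFun h i
      simp [dualBasisVec] at this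
    · intro a ha b hb hab
      have hsum : ∀ j, a j + b j = dualBasisVec i j := fun j => (congrFun hab j).symm
      have hzero : ∀ j, j ≠ i → a j = 0 ∧ b j = 0 := by
        intro j hj
        have h0 : a j + b j = 0 := by
          rw [hsum j]; simp [dualBasisVec, Pi.single_apply, hj]
        have ha' := sem_nonneg ρ D ha j
        have hb' := sem_nonneg ρ D hb j
        constructor <;> linarith
      by_cases hai : a i = 0
      · left
        funext j
        by_cases h : j = i
        · rw [h, hai]; rfl
        · exact (hzero j h).1
      · right
        obtain ⟨m, hma⟩ := ha.1 i
        have hm1 : (1:ℚ) ≤ a i := by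
          rw [hma]
          have : m ≠ 0 := by rintro rfl; simp at hma; exact hai hma
          exact_mod_cast Nat.one_le_iff_ne_zero.mpr this
        have hs1 : a i + b i = 1 := by rw [hsum i]; simp [dualBasisVec]
        have hb' := sem_nonneg ρ D hb i
        have hbi : b i = 0 := by linarith
        funext j
        by_cases h : j = i
        · rw [h, hbi]; rfl
        · exact (hzero j h).2

end Proof

theorem smooth_implies_star_property'
    (ρ : Δ → σ → ℚ) (D : Finset Δ)
    (hdist : Distinguished ρ D) (hsmooth : Smooth ρ D) :
    SigmaQuot ρ D = dualBasisVec '' (SigmaSet ρ D)ᶜ ∧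
    LinearIndependent ℚ (fun x : SigmaQuot ρ D => (x : σ → ℚ)) ∧
    Submodule.span ℚ (SigmaQuot ρ D) = Submodule.span ℚ (XiQuotSet ρ D) := by
  have heq := sigmaQuot_eq ρ D hsmooth
  refine ⟨heq, ?_, ?_⟩
  · -- linear independence
    have hbase : LinearIndependent ℚ (fun x : Set.range (Pi.basisFun ℚ σ) => (x : σ → ℚ)) :=
      ((linearIndepOn_id_range_iff (Pi.basisFun ℚ σ).injective).mpr
        (Pi.basisFun ℚ σ).linearIndependent).linearIndependent
    refine LinearIndepOn.linearIndependent (LinearIndepOn.mono (LinearIndependent.linearIndepOn_id' hbase Subtype.range_coe) ?_)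
    rw [heq]
    rintro x ⟨i, _, rfl⟩
    exact ⟨i, by simp [dualBasisVec]⟩
  · apply le_antisymm
    · apply Submodule.span_mono
      intro x hx
      exact hx.1.2
    · rw [Submodule.span_le]
      intro ξ hξ
      have hvanish : ∀ j ∈ SigmaSet ρ D, ξ j = 0 := by
        rw [xiquot_eq ρ D hsmooth] at hξ; exact hξ
      have hrepr : ξ = ∑ i, ξ i • dualBasisVec i := by
        funext j
        simp [dualBasisVec, Pi.single_apply, Finset.sum_apply]
      rw [hrepr]
      apply Submodule.sum_mem
      intro i _
      by_cases h : i ∈ SigmaSet ρ D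
      · rw [hvanish i h, zero_smul]; exact Submodule.zero_mem _
      · exact Submodule.smul_mem _ _ (Submodule.subset_span (by rw [heq]; exact ⟨i, h, rfl⟩))


/-- a smooth distinguished subset has the *-property; moreover
`Σ/Δ' = Σ \ Σ(Δ')`. -/
theorem smooth_implies_star_property
    (ρ : Δ → σ → ℚ) (D : Finset Δ)
    (hdist : Distinguished ρ D) (hsmooth : Smooth ρ D) :
    SigmaQuot ρ D = dualBasisVec '' (SigmaSet ρ D)ᶜ ∧
    LinearIndependent ℚ (fun x : SigmaQuot ρ D => (x : σ → ℚ)) ∧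
    Submodule.span ℚ (SigmaQuot ρ D) = Submodule.span ℚ (XiQuotSet ρ D) := by
  exact smooth_implies_star_property' ρ D hdist hsmooth

end Stmt1
end

section
/- Let (S^p, Σ, A) be a cuspidal, strongly Δ-connected spherical system of type A–D in which every spherical root is of type a_1 (so S^p = ∅ and Σ = S). If the system has a projective element δ ∈ A, then ⟨ρ(δ),α⟩ = 1 for every α ∈ Σ; that is, δ ∈ ⋂_{α∈Σ} A(α). -/
/-!
Start from a simple root `α₀` with `δ ∈ A(α₀)` (axiom (A3)) and walk along a chain of strongly
Δ-adjacent roots. If `δ ∈ A(x)` and another colour `δ'` lies in `A(x) ∩ A(y)` with `y ≠ x`, then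
`A(x) = {δ, δ'}`, so (A2) gives `⟨ρ(δ), y⟩ = c(x, y) - 1 ≤ -1`, contradicting projectivity.
Hence `δ` itself lies in `A(y)`, and by induction in every `A(α)`.
-/

section A1System

variable {S A : Type*} {c : S → S → ℚ} {pair : A → S → ℚ}

theorem pair_add_pair_eq_cartan {α : S}
    (hA2 : ∃ δp δm : A, δp ≠ δm ∧ pair δp α = 1 ∧ pair δm α = 1 ∧
      (∀ δ : A, pair δ α = 1 → δ = δp ∨ δ = δm) ∧
      ∀ β : S, pair δp β + pair δm β = c α β)
    {δ δ' : A} (hne : δ ≠ δ') (hδ : pair δ α = 1) (hδ' : pair δ' α = 1) (β : S) :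
    pair δ β + pair δ' β = c α β := by
  obtain ⟨δp, δm, -, -, -, huniq, hsum⟩ := hA2
  rcases huniq δ hδ with rfl | rfl <;> rcases huniq δ' hδ' with rfl | rfl
  · exact absurd rfl hne
  · exact hsum β
  · rw [add_comm]; exact hsum β
  · exact absurd rfl hne

theorem pair_eq_one_of_shared_colour
    (hcartan_off : ∀ α β, α ≠ β → c α β ≤ 0) {x y : S}
    (hA2 : ∃ δp δm : A, δp ≠ δm ∧ pair δp x = 1 ∧ pair δm x = 1 ∧
      (∀ δ : A, pair δ x = 1 → δ = δp ∨ δ = δm) ∧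
      ∀ β : S, pair δp β + pair δm β = c x β)
    {δ δ' : A} (hδ_nonneg : 0 ≤ pair δ y) (hδx : pair δ x = 1)
    (hδ'x : pair δ' x = 1) (hδ'y : pair δ' y = 1) :
    pair δ y = 1 := by
  by_cases hxy : x = y
  · exact hxy ▸ hδx
  by_cases hδδ' : δ = δ'
  · exact hδδ' ▸ hδ'y
  have hsum := pair_add_pair_eq_cartan hA2 hδδ' hδx hδ'x y
  linarith [hcartan_off x y hxy]

end A1System

theorem projective_element_of_a1_system_general
    {S A : Type*}
    (c : S → S → ℚ) (pair : A → S → ℚ)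
    (hcartan_off : ∀ α β, α ≠ β → c α β ≤ 0)
    -- axiom (A2): `A(α) = {δ_α^+, δ_α^-}` and `ρ(δ_α^+)+ρ(δ_α^-) = α^∨` on `Σ`
    (hA2 : ∀ α : S, ∃ δp δm : A, δp ≠ δm ∧ pair δp α = 1 ∧ pair δm α = 1 ∧
      (∀ δ : A, pair δ α = 1 → δ = δp ∨ δ = δm) ∧
      ∀ β : S, pair δp β + pair δm β = c α β)
    -- axiom (A3): `A = ⋃ A(α)`
    (hA3 : ∀ δ : A, ∃ α : S, pair δ α = 1)
    -- strong Δ-connectedness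
    (hconn : ∀ α β : S,
      Relation.ReflTransGen (fun x y : S => ∃ δ : A, pair δ x = 1 ∧ pair δ y = 1) α β)
    -- `δ` is a projective element
    (δ : A) (hproj : ∀ α : S, 0 ≤ pair δ α) :
    ∀ α : S, pair δ α = 1 := by
  intro α
  obtain ⟨α₀, hα₀⟩ := hA3 δ
  induction hconn α₀ α with
  | refl => exact hα₀
  | @tail x y _ hstep ih =>
    obtain ⟨δ', hδ'x, hδ'y⟩ := hstep
    exact pair_eq_one_of_shared_colour hcartan_off (hA2 x) (hproj y) ih hδ'x hδ'y

theorem projective_element_of_a1_system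
    {S A : Type*} [Fintype S] [Fintype A]
    (c : S → S → ℚ) (pair : A → S → ℚ)
    (hcartan_diag : ∀ α, c α α = 2)
    (hcartan_off : ∀ α β, α ≠ β → c α β ≤ 0)
    -- axiom (A1)
    (hA1 : ∀ (δ : A) (α : S), pair δ α ≤ 1)
    -- axiom (A2): `A(α) = {δ_α^+, δ_α^-}` and `ρ(δ_α^+)+ρ(δ_α^-) = α^∨` on `Σ`
    (hA2 : ∀ α : S, ∃ δp δm : A, δp ≠ δm ∧ pair δp α = 1 ∧ pair δm α = 1 ∧
      (∀ δ : A, pair δ α = 1 → δ = δp ∨ δ = δm) ∧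
      ∀ β : S, pair δp β + pair δm β = c α β)
    -- axiom (A3): `A = ⋃ A(α)`
    (hA3 : ∀ δ : A, ∃ α : S, pair δ α = 1)
    -- strong Δ-connectedness
    (hconn : ∀ α β : S,
      Relation.ReflTransGen (fun x y : S => ∃ δ : A, pair δ x = 1 ∧ pair δ y = 1) α β)
    -- `δ` is a projective element
    (δ : A) (hproj : ∀ α : S, 0 ≤ pair δ α) :
    ∀ α : S, pair δ α = 1 :=
  projective_element_of_a1_system_general c pair hcartan_off hA2 hA3 hconn δ hproj
end

section
/- In the root lattice of type D_n (n ≥ 5 odd), for the distinguished data of the case dc*(n): with Σ = {α_1+α_2, α_2+α_3, …, α_{n-3}+α_{n-2}, α_{n-2}+α_{n-1}, α_{n-2}+α_n}, the set of indecomposable elements of the semigroup {Σ c_i(α_i+α_{i+1}) : c_i ≥ 0, c_i = c_{i+1} for all odd i, 1 ≤ i ≤ n−3} (intersected with the relevant sublattice) equals {α_1+2α_2+α_3, α_3+2α_4+α_5, …, α_{n-4}+2α_{n-3}+α_{n-2}}. -/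
/-!
The constraint `c_{2j-1} = c_{2j}` groups the generators `α_i + α_{i+1}` into pairs, so the
semigroup consists exactly of the combinations `Σ_j d_j (α_{2j-1} + 2α_{2j} + α_{2j+1})` with
`d_j ∈ ℕ` and `1 ≤ j ≤ (n-3)/2` (an unpaired last generator is killed by the support condition).
Since the coefficient of `α_{2j}` is `2 d_j`, the element determines `d`: the semigroup is the
free commutative monoid on the elements `α_{2j-1} + 2α_{2j} + α_{2j+1}`, and the indecomposables
of a free commutative monoid are its basis elements.
-/

namespace Stmt12

/-- membership in the semigroup of the case `dc*(n)` -/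
def semMem (n : ℕ) (x : ℕ → ℕ) : Prop :=
  ∃ c : ℕ → ℕ,
    (∀ i, (i < 1 ∨ n - 3 < i) → c i = 0) ∧
    (∀ i, Odd i → i ∈ Finset.Icc 1 (n - 3) → c i = c (i + 1)) ∧
    x = fun j => c (j - 1) + c j

/-- `x` is an indecomposable element of the semigroup -/
def Indec (n : ℕ) (x : ℕ → ℕ) : Prop :=
  semMem n x ∧ x ≠ 0 ∧
    ∀ a b : ℕ → ℕ, semMem n a → semMem n b → x = a + b → a = 0 ∨ b = 0

/-- the coefficient function of `α_{2j-1} + 2α_{2j} + α_{2j+1}` -/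
def dThree (j : ℕ) : ℕ → ℕ := fun k =>
  if k = 2 * j - 1 then 1 else if k = 2 * j then 2 else if k = 2 * j + 1 then 1 else 0

open Function

def IsIndecomposableIn {M : Type*} [AddZeroClass M] (S : Set M) (x : M) : Prop :=
  x ∈ S ∧ x ≠ 0 ∧ ∀ a b, a ∈ S → b ∈ S → x = a + b → a = 0 ∨ b = 0

theorem indec_iff_isIndecomposableIn {n : ℕ} {x : ℕ → ℕ} :
    Indec n x ↔ IsIndecomposableIn {x | semMem n x} x :=
  Iff.rfl

theorem isIndecomposableIn_image_iff {M N : Type*} [AddZeroClass M] [AddZeroClass N] {f : M →+ N}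
    (hf : Injective f) {S : Set M} {y : N} :
    IsIndecomposableIn (f '' S) y ↔ ∃ x, IsIndecomposableIn S x ∧ f x = y := by
  constructor
  · rintro ⟨⟨x, hx, rfl⟩, hne, hdec⟩
    refine ⟨x, ⟨hx, fun h => hne (by rw [h, map_zero]), fun a b ha hb hab => ?_⟩, rfl⟩
    simpa [map_eq_zero_iff f hf] using hdec (f a) (f b) ⟨a, ha, rfl⟩ ⟨b, hb, rfl⟩ (by simp [hab])
  · rintro ⟨x, ⟨hx, hne, hdec⟩, rfl⟩
    refine ⟨⟨x, hx, rfl⟩, (map_ne_zero_iff f hf).2 hne, ?_⟩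
    rintro _ _ ⟨a, ha, rfl⟩ ⟨b, hb, rfl⟩ hab
    rw [← map_add] at hab
    simpa [map_eq_zero_iff f hf] using hdec a b ha hb (hf hab)

theorem isIndecomposableIn_supported_iff {ι : Type*} [DecidableEq ι] {s : Set ι} {d : ι → ℕ} :
    IsIndecomposableIn {d | support d ⊆ s} d ↔ ∃ i ∈ s, d = Pi.single i 1 := by
  constructor
  · rintro ⟨hd, hne, hdec⟩
    obtain ⟨i, hi⟩ : ∃ i, d i ≠ 0 := by
      by_contra! h
      exact hne (funext h)
    have hle : Pi.single i 1 ≤ d := fun k => by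
      by_cases hk : k = i
      · subst hk; simp only [Pi.single_eq_same]; omega
      · simp [hk]
    have hsingle : Pi.single i (1 : ℕ) ∈ {d | support d ⊆ s} :=
      (Pi.support_single_subset).trans (Set.singleton_subset_iff.2 (hd hi))
    have hrest : d - Pi.single i 1 ∈ {d | support d ⊆ s} :=
      fun k hk => hd fun h => hk (by simp [h])
    refine ⟨i, hd hi, ?_⟩
    rcases hdec _ _ hsingle hrest (add_tsub_cancel_of_le hle).symm with h | h
    · simpa using congrFun h i
    · exact le_antisymm (tsub_eq_zero_iff_le.1 h) hle
  · rintro ⟨i, hi, rfl⟩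
    refine ⟨Pi.support_single_subset.trans (Set.singleton_subset_iff.2 hi),
      fun h => by simpa using congrFun h i, fun a b _ _ hab => ?_⟩
    have hsum (k : ι) : a k + b k = (Pi.single i 1 : ι → ℕ) k := by rw [hab]; rfl
    obtain ha | hb : a i = 0 ∨ b i = 0 := by
      have := hsum i
      rw [Pi.single_eq_same] at this
      omega
    · left
      funext k
      rw [Pi.zero_apply]
      rcases eq_or_ne k i with rfl | hk
      · exact ha
      · have := hsum k
        rw [Pi.single_eq_of_ne hk] at this
        omega
    · right
      funext k
      rw [Pi.zero_apply]
      rcases eq_or_ne k i with rfl | hk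
      · exact hb
      · have := hsum k
        rw [Pi.single_eq_of_ne hk] at this
        omega

/-- The coefficient function of `Σ_j d_j (α_{2j-1} + 2α_{2j} + α_{2j+1})` (for `d 0 = 0`). -/
def combDThree : (ℕ → ℕ) →+ (ℕ → ℕ) where
  toFun d k := d (k / 2) + d ((k + 1) / 2)
  map_zero' := rfl
  map_add' _ _ := funext fun _ => add_add_add_comm _ _ _ _

theorem combDThree_apply (d : ℕ → ℕ) (k : ℕ) : combDThree d k = d (k / 2) + d ((k + 1) / 2) :=
  rfl

theorem combDThree_two_mul (d : ℕ → ℕ) (j : ℕ) : combDThree d (2 * j) = 2 * d j := by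
  rw [combDThree_apply, show 2 * j / 2 = j by omega, show (2 * j + 1) / 2 = j by omega, two_mul]

theorem combDThree_injective : Injective combDThree := fun d e h =>
  funext fun j => by
    have := congrFun h (2 * j)
    rw [combDThree_two_mul, combDThree_two_mul] at this
    omega

theorem dThree_eq_combDThree_single {j : ℕ} (hj : 1 ≤ j) :
    dThree j = combDThree (Pi.single j 1) := by
  funext k
  simp only [dThree, combDThree_apply, Pi.single_apply]
  split_ifs <;> omega

theorem semMem_iff_exists_combDThree {n : ℕ} {x : ℕ → ℕ} :
    semMem n x ↔ ∃ d, support d ⊆ Set.Icc 1 ((n - 3) / 2) ∧ combDThree d = x := by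
  constructor
  · rintro ⟨c, hsupp, hpair, rfl⟩
    have hodd : ∀ i, Odd i → c (i + 1) = c i := fun i hi => by
      by_cases hin : i ≤ n - 3
      · exact (hpair i hi (Finset.mem_Icc.2 ⟨hi.pos, hin⟩)).symm
      · rw [hsupp i (by omega), hsupp (i + 1) (by omega)]
    have hconst : ∀ i, c i = c (2 * ((i + 1) / 2)) := fun i => by
      obtain ⟨j, rfl | rfl⟩ := Nat.even_or_odd' i
      · rw [show (2 * j + 1) / 2 = j by omega]
      · rw [show (2 * j + 1 + 1) / 2 = j + 1 by omega, mul_add_one, ← hodd _ (odd_two_mul_add_one j)]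
    refine ⟨fun j => c (2 * j), ?_, ?_⟩
    · refine support_subset_iff'.2 fun j hj => hsupp _ ?_
      rw [Set.mem_Icc] at hj
      omega
    · funext k
      rcases k with _ | k
      · rfl
      · rw [combDThree_apply, Nat.add_sub_cancel, hconst k, hconst (k + 1)]
  · rintro ⟨d, hd, rfl⟩
    rw [support_subset_iff'] at hd
    refine ⟨fun i => d ((i + 1) / 2), fun i hi => hd _ ?_, ?_, ?_⟩
    · rw [Set.mem_Icc]
      omega
    · rintro _ ⟨j, rfl⟩ -
      change d _ = d _
      congr 1
      omega
    · funext k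
      rcases k with _ | k
      · rfl
      · rw [combDThree_apply, Nat.add_sub_cancel]

theorem indecomposables_of_dcStar_general (n : ℕ) :
    {x : ℕ → ℕ | Indec n x} =
      {x : ℕ → ℕ | ∃ j ∈ Finset.Icc 1 ((n - 3) / 2), x = dThree j} := by
  have hsem : {x | semMem n x} = combDThree '' {d | support d ⊆ Set.Icc 1 ((n - 3) / 2)} :=
    Set.ext fun _ => semMem_iff_exists_combDThree
  ext x
  simp only [Set.mem_ofPred_eq, indec_iff_isIndecomposableIn, hsem,
    isIndecomposableIn_image_iff combDThree_injective, isIndecomposableIn_supported_iff,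
    Finset.mem_Icc, ← Set.mem_Icc]
  constructor
  · rintro ⟨_, ⟨j, hj, rfl⟩, rfl⟩
    exact ⟨j, hj, (dThree_eq_combDThree_single hj.1).symm⟩
  · rintro ⟨j, hj, rfl⟩
    exact ⟨_, ⟨j, hj, rfl⟩, (dThree_eq_combDThree_single hj.1).symm⟩

theorem indecomposables_of_dcStar (n : ℕ) (h5 : 5 ≤ n) (hodd : Odd n) :
    {x : ℕ → ℕ | Indec n x} =
      {x : ℕ → ℕ | ∃ j ∈ Finset.Icc 1 ((n - 3) / 2), x = dThree j} :=
  indecomposables_of_dcStar_general n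

end Stmt12
end

section
/- Let (S^p, Σ, A) be a spherical system with colours Δ, and let Δ'' ⊂ Δ be a parabolic distinguished subset (V(Δ'') = V, equivalently Σ(Δ'') = Σ). Then Δ'' is smooth and the quotient spherical system (S^p,Σ,A)/Δ'' has empty set of spherical roots: Σ/Δ'' = ∅. -/
/-!
STATEMENT 16: Let `(S^p,Σ,A)` be a spherical system with colours `Δ`, and let
`Δ'' ⊆ Δ` be a parabolic distinguished subset (`V(Δ'') = V`).  Then `Δ''` is smooth
and the quotient spherical system has empty set of spherical roots: `Σ/Δ'' = ∅`.

Coordinates with respect to the basis `Σ` of `Ξ` are used, as in the context: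
`V = ℚ⊗Ξ*`, `V(Δ') = ⟨ρ(Δ') ∪ {γ^* : γ ∈ Σ(Δ')}⟩`, `Δ'` smooth if
`V(Δ') = ⟨γ^* : γ ∈ Σ(Δ')⟩`, and `Σ/Δ'` is the set of indecomposable elements of the
semigroup of nonnegative combinations of `Σ` lying in `Ξ/Δ' = V(Δ')^⊥ ∩ Ξ`.
-/

namespace Stmt16

variable {σ Δ : Type*} [Fintype σ] [DecidableEq σ] [Fintype Δ]

def phi (ρ : Δ → σ → ℚ) (D : Finset Δ) (cc : Δ → ℚ) : σ → ℚ :=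
  fun i => ∑ δ ∈ D, cc δ * ρ δ i

def Distinguished (ρ : Δ → σ → ℚ) (D : Finset Δ) : Prop :=
  ∃ cc : Δ → ℚ, (∀ δ ∈ D, 0 < cc δ) ∧ ∀ i, 0 ≤ phi ρ D cc i

def SigmaSet (ρ : Δ → σ → ℚ) (D : Finset Δ) : Set σ :=
  {i | ∃ cc : Δ → ℚ, (∀ δ ∈ D, 0 < cc δ) ∧ (∀ j, 0 ≤ phi ρ D cc j) ∧ 0 < phi ρ D cc i}

def dualBasisVec (i : σ) : σ → ℚ := Pi.single i 1

def VD (ρ : Δ → σ → ℚ) (D : Finset Δ) : Submodule ℚ (σ → ℚ) :=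
  Submodule.span ℚ ((fun δ => ρ δ) '' ↑D ∪ dualBasisVec '' SigmaSet ρ D)

def Smooth (ρ : Δ → σ → ℚ) (D : Finset Δ) : Prop :=
  VD ρ D = Submodule.span ℚ (dualBasisVec '' SigmaSet ρ D)

def XiQuotSet (ρ : Δ → σ → ℚ) (D : Finset Δ) : Set (σ → ℚ) :=
  {ξ | ∀ v ∈ VD ρ D, ∑ i, v i * ξ i = 0}

def Sem (ρ : Δ → σ → ℚ) (D : Finset Δ) : Set (σ → ℚ) :=
  {ξ | (∀ i, ∃ m : ℕ, ξ i = m) ∧ ξ ∈ XiQuotSet ρ D}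

def SigmaQuot (ρ : Δ → σ → ℚ) (D : Finset Δ) : Set (σ → ℚ) :=
  {ξ | ξ ∈ Sem ρ D ∧ ξ ≠ 0 ∧
    ∀ a ∈ Sem ρ D, ∀ b ∈ Sem ρ D, ξ = a + b → a = 0 ∨ b = 0}

end Stmt16

/-!
Fix a generic admissible `C`: positive on `Δ''`, with `ρ`-combination nonnegative and
strictly positive exactly on `Σ(Δ'')`. If `γ ∉ Σ(Δ'')` but `γ^* ∈ V(Δ'')`, then off `Σ(Δ'')`
the vector `γ^*` is a combination `l` of the colours; for large `M`, `l + M C` is admissible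
and its combination is positive at `γ`, so `γ ∈ Σ(Δ'')` after all. Hence a parabolic `Δ''`
has `Σ(Δ'') = Σ`, which gives smoothness, while `V(Δ'') = V` leaves `Ξ/Δ'' = 0`.
-/

namespace Stmt16

open Filter

variable {σ Δ : Type*}

lemma phi_add (ρ : Δ → σ → ℚ) (D : Finset Δ) (a b : Δ → ℚ) (j : σ) :
    phi ρ D (a + b) j = phi ρ D a j + phi ρ D b j := by
  simp [phi, add_mul, Finset.sum_add_distrib]

lemma phi_smul (ρ : Δ → σ → ℚ) (D : Finset Δ) (c : ℚ) (a : Δ → ℚ) (j : σ) :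
    phi ρ D (c • a) j = c * phi ρ D a j := by
  simp [phi, Finset.mul_sum, mul_assoc]

lemma phi_sum {ι : Type*} (ρ : Δ → σ → ℚ) (D : Finset Δ) (t : Finset ι) (f : ι → Δ → ℚ)
    (j : σ) : phi ρ D (∑ k ∈ t, f k) j = ∑ k ∈ t, phi ρ D (f k) j := by
  simp only [phi, Finset.sum_apply, Finset.sum_mul]
  exact Finset.sum_comm

lemma eventually_pos_add_mul {𝕜 : Type*} [Field 𝕜] [LinearOrder 𝕜] [IsStrictOrderedRing 𝕜]
    (a : 𝕜) {b : 𝕜} (hb : 0 < b) : ∀ᶠ M in atTop, 0 < a + M * b :=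
  (tendsto_atTop_add_const_left _ a (tendsto_id.atTop_mul_const hb)).eventually_gt_atTop 0

lemma exists_phi_pos_on_sigmaSet [Fintype σ] {ρ : Δ → σ → ℚ} {D : Finset Δ}
    (hdist : Distinguished ρ D) :
    ∃ C : Δ → ℚ, (∀ δ ∈ D, 0 < C δ) ∧ (∀ j, 0 ≤ phi ρ D C j) ∧
      ∀ j ∈ SigmaSet ρ D, 0 < phi ρ D C j := by
  obtain ⟨c₀, hc₀D, hc₀⟩ := hdist
  have witness (j : σ) : ∃ c : Δ → ℚ, (∀ δ ∈ D, 0 ≤ c δ) ∧ (∀ k, 0 ≤ phi ρ D c k) ∧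
      (j ∈ SigmaSet ρ D → 0 < phi ρ D c j) := by
    by_cases hj : j ∈ SigmaSet ρ D
    · obtain ⟨c, hcD, hc, hcj⟩ := hj
      exact ⟨c, fun δ hδ => (hcD δ hδ).le, hc, fun _ => hcj⟩
    · exact ⟨0, fun _ _ => le_rfl, fun _ => by simp [phi], fun h => absurd h hj⟩
  choose G hGD hG hGpos using witness
  have hphi (k : σ) : phi ρ D (c₀ + ∑ j, G j) k = phi ρ D c₀ k + ∑ j, phi ρ D (G j) k := by
    rw [phi_add, phi_sum]
  refine ⟨c₀ + ∑ j, G j, fun δ hδ => ?_, fun k => ?_, fun j hj => ?_⟩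
  · simpa only [Pi.add_apply, Finset.sum_apply] using
      add_pos_of_pos_of_nonneg (hc₀D δ hδ) (Finset.sum_nonneg fun j _ => hGD j δ hδ)
  · rw [hphi]
    exact add_nonneg (hc₀ k) (Finset.sum_nonneg fun j _ => hG j k)
  · rw [hphi]
    exact add_pos_of_nonneg_of_pos (hc₀ j)
      ((hGpos j hj).trans_le (Finset.single_le_sum (fun k _ => hG k j) (Finset.mem_univ j)))

lemma exists_phi_eq_of_mem_VD [DecidableEq σ] {ρ : Δ → σ → ℚ} {D : Finset Δ} {v : σ → ℚ}
    (hv : v ∈ VD ρ D) : ∃ l : Δ → ℚ, ∀ j ∉ SigmaSet ρ D, phi ρ D l j = v j := by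
  rw [VD, Submodule.span_union, Submodule.mem_sup] at hv
  obtain ⟨y, hy, z, hz, rfl⟩ := hv
  have hz0 : z ∈ Submodule.pi (SigmaSet ρ D)ᶜ fun _ => (⊥ : Submodule ℚ ℚ) := by
    refine Submodule.span_le.2 ?_ hz
    rintro _ ⟨k, hk, rfl⟩
    exact Submodule.mem_pi.2 fun j hj => (Submodule.mem_bot ℚ).2 <|
      Pi.single_eq_of_ne (fun hjk : j = k => hj (hjk ▸ hk)) 1
  obtain ⟨l, hlD, rfl⟩ := (Finsupp.mem_span_image_iff_linearCombination ℚ).1 hy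
  refine ⟨l, fun j hj => ?_⟩
  rw [Finsupp.linearCombination_apply,
    Finsupp.sum_of_support_subset l (Finset.coe_subset.1 hlD) _ (by simp)]
  simpa [phi] using Submodule.mem_pi.1 hz0 j hj

variable [Fintype σ] [DecidableEq σ]

lemma mem_sigmaSet_of_dualBasisVec_mem_VD {ρ : Δ → σ → ℚ} {D : Finset Δ} {i : σ}
    (hdist : Distinguished ρ D) (hi : dualBasisVec i ∈ VD ρ D) : i ∈ SigmaSet ρ D := by
  by_contra hiS
  obtain ⟨C, hCD, hC, hCS⟩ := exists_phi_pos_on_sigmaSet hdist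
  obtain ⟨l, hl⟩ := exists_phi_eq_of_mem_VD hi
  have hlarge : ∀ᶠ M in atTop, 0 < M ∧ (∀ δ ∈ D, 0 < l δ + M * C δ) ∧
      ∀ j ∈ SigmaSet ρ D, 0 < phi ρ D l j + M * phi ρ D C j :=
    (eventually_gt_atTop 0).and <|
      ((eventually_all_finset D).2 fun δ hδ => eventually_pos_add_mul _ (hCD δ hδ)).and <|
        (eventually_all_finite (Set.toFinite _)).2 fun j hj => eventually_pos_add_mul _ (hCS j hj)
  obtain ⟨M, hM, hMD, hMS⟩ := hlarge.exists
  have hphi (j : σ) : phi ρ D (l + M • C) j = phi ρ D l j + M * phi ρ D C j := by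
    rw [phi_add, phi_smul]
  have hoff (j : σ) (hj : j ∉ SigmaSet ρ D) : dualBasisVec i j ≤ phi ρ D (l + M • C) j := by
    rw [hphi, hl j hj]
    exact le_add_of_nonneg_right (mul_nonneg hM.le (hC j))
  refine hiS ⟨l + M • C, fun δ hδ => by simpa using hMD δ hδ, fun j => ?_, ?_⟩
  · by_cases hj : j ∈ SigmaSet ρ D
    · exact (hphi j ▸ hMS j hj).le
    · exact (Pi.single_nonneg.2 zero_le_one j).trans (hoff j hj)
  · exact zero_lt_one.trans_le (by simpa [dualBasisVec] using hoff i hiS)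

lemma span_dualBasisVec_univ : Submodule.span ℚ (dualBasisVec '' Set.univ : Set (σ → ℚ)) = ⊤ := by
  have hbasis : dualBasisVec = ⇑(Pi.basisFun ℚ σ) :=
    funext fun i => (Pi.basisFun_apply ℚ σ i).symm
  rw [Set.image_univ, hbasis, Module.Basis.span_eq]

lemma eq_zero_of_mem_XiQuotSet {ρ : Δ → σ → ℚ} {D : Finset Δ} (hpar : VD ρ D = ⊤) {ξ : σ → ℚ}
    (hξ : ξ ∈ XiQuotSet ρ D) : ξ = 0 := by
  funext j
  simpa [dualBasisVec, Pi.single_apply] using hξ (dualBasisVec j) (hpar ▸ Submodule.mem_top)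

variable [Fintype Δ]

theorem parabolic_is_smooth_with_empty_quotient
    (ρ : Δ → σ → ℚ) (D : Finset Δ)
    (hdist : Distinguished ρ D)
    (hpar : VD ρ D = ⊤) :
    Smooth ρ D ∧ SigmaQuot ρ D = ∅ := by
  have hS : SigmaSet ρ D = Set.univ := Set.eq_univ_of_forall fun i =>
    mem_sigmaSet_of_dualBasisVec_mem_VD hdist (hpar ▸ Submodule.mem_top)
  refine ⟨by rw [Smooth, hpar, hS, span_dualBasisVec_univ], ?_⟩
  exact Set.eq_empty_of_forall_notMem fun ξ ⟨⟨_, hξ⟩, hξ0, _⟩ =>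
    hξ0 (eq_zero_of_mem_XiQuotSet hpar hξ)

end Stmt16
end

section
/- Let Δ'_1 and Δ'_2 be distinguished subsets with the *-property of a spherical system (S^p, Σ, A), witnessed respectively by Σ_1, Σ_2 ⊂ Σ disjoint with Δ'_i ⊂ Δ(Σ_i). Then the quotient set of spherical roots of the union satisfies Σ/(Δ'_1 ∪ Δ'_2) = (Σ \ (Σ_1 ∪ Σ_2)) ∪ (Σ_1/Δ'_1) ∪ (Σ_2/Δ'_2). -/
/-!
STATEMENT 19: Let `Δ'_1, Δ'_2` be distinguished subsets with the *-property of a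
spherical system `(S^p,Σ,A)`, witnessed by disjoint `Σ_1, Σ_2 ⊆ Σ` with
`Δ'_i ⊆ Δ(Σ_i)`.  Then
`Σ/(Δ'_1 ∪ Δ'_2) = (Σ \ (Σ_1 ∪ Σ_2)) ∪ (Σ_1/Δ'_1) ∪ (Σ_2/Δ'_2)`.

Coordinates with respect to the basis `Σ` of `Ξ` are used: spherical roots indexed by
a finite type `σ`, colours by `Δ`, simple roots by `S`; `ρ δ : σ → ℚ` records the
values of the colour `δ` on the spherical roots, `moves δ` is the set of simple roots
moving `δ`, and `suppRoot i` is the support of the spherical root `i`.  The localized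
quotient data on a subset `R ⊆ σ` (the localization of the system in `Σ' = R`) is
defined by restricting everything to the coordinates in `R`.
-/

namespace Stmt19

variable {σ Δ S : Type*} [Fintype σ] [DecidableEq σ] [Fintype Δ] [DecidableEq Δ]

def phi (ρ : Δ → σ → ℚ) (D : Finset Δ) (cc : Δ → ℚ) : σ → ℚ :=
  fun i => ∑ δ ∈ D, cc δ * ρ δ i

/-- `Σ'(Δ')` computed in the localization of the system in the subset `R` of `Σ` -/
def SigmaSetOn (R : Finset σ) (ρ : Δ → σ → ℚ) (D : Finset Δ) : Set σ :=
  {i | i ∈ R ∧ ∃ cc : Δ → ℚ, (∀ δ ∈ D, 0 < cc δ) ∧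
    (∀ j ∈ R, 0 ≤ phi ρ D cc j) ∧ 0 < phi ρ D cc i}

/-- `Ξ'/Δ'` computed in the localization in `R` -/
def XiQuotSetOn (R : Finset σ) (ρ : Δ → σ → ℚ) (D : Finset Δ) : Set (σ → ℚ) :=
  {ξ | (∀ i, i ∉ R → ξ i = 0) ∧ (∀ δ ∈ D, ∑ i, ρ δ i * ξ i = 0) ∧
    ∀ i ∈ SigmaSetOn R ρ D, ξ i = 0}

def SemOn (R : Finset σ) (ρ : Δ → σ → ℚ) (D : Finset Δ) : Set (σ → ℚ) :=
  {ξ | (∀ i, ∃ m : ℕ, ξ i = m) ∧ ξ ∈ XiQuotSetOn R ρ D}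

/-- `Σ'/Δ'` computed in the localization in `R` -/
def SigmaQuotOn (R : Finset σ) (ρ : Δ → σ → ℚ) (D : Finset Δ) : Set (σ → ℚ) :=
  {ξ | ξ ∈ SemOn R ρ D ∧ ξ ≠ 0 ∧
    ∀ a ∈ SemOn R ρ D, ∀ b ∈ SemOn R ρ D, ξ = a + b → a = 0 ∨ b = 0}

/-- the *-property, for the localization in `R` -/
def StarOn (R : Finset σ) (ρ : Δ → σ → ℚ) (D : Finset Δ) : Prop :=
  LinearIndependent ℚ (fun x : SigmaQuotOn R ρ D => (x : σ → ℚ)) ∧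
    Submodule.span ℚ (SigmaQuotOn R ρ D) = Submodule.span ℚ (XiQuotSetOn R ρ D)

def DistinguishedOn (R : Finset σ) (ρ : Δ → σ → ℚ) (D : Finset Δ) : Prop :=
  ∃ cc : Δ → ℚ, (∀ δ ∈ D, 0 < cc δ) ∧ ∀ i ∈ R, 0 ≤ phi ρ D cc i

/-- `Δ(Σ')`: the colours moved by simple roots in `supp(Σ')` and vanishing on
`Σ \ Σ'`; here `Σ'` is given by the subset `R` of indices. -/
def DeltaOf (moves : Δ → Finset S) (suppRoot : σ → Finset S)
    (ρ : Δ → σ → ℚ) (R : Finset σ) : Set Δ :=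
  {δ | (∃ α ∈ moves δ, ∃ i ∈ R, α ∈ suppRoot i) ∧ ∀ i, i ∉ R → ρ δ i = 0}

def dualBasisVec (i : σ) : σ → ℚ := Pi.single i 1

/-!
Every colour of `Δ'₁ ∪ Δ'₂` vanishes off `Σ₁` or off `Σ₂`, so restricting a vector to the
coordinates in `Σ₁`, in `Σ₂`, or outside both keeps it in the semigroup whose
indecomposables form `Σ/(Δ'₁ ∪ Δ'₂)`; hence each such indecomposable is supported in one of
the three blocks. Outside `Σ₁ ∪ Σ₂` no condition is imposed beyond integrality, so the
indecomposables there are the basis vectors. On `Σᵢ` the semigroup of the localization sits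
inside the global one and is saturated in it (the distinguishedness of the other `Δ'ⱼ` is
what puts `Σ(Δ'ᵢ)` computed in `Σᵢ` inside `Σ(Δ'₁ ∪ Δ'₂)`), so indecomposables supported in
`Σᵢ` are the same in both semigroups.
-/

section Indecomposables

variable {ι : Type*} {M N : Set (ι → ℚ)} {ξ : ι → ℚ}

-- `SigmaQuotOn R ρ D` is `indecomposables (SemOn R ρ D)` by definition.
def indecomposables (M : Set (ι → ℚ)) : Set (ι → ℚ) :=
  {ξ | ξ ∈ M ∧ ξ ≠ 0 ∧ ∀ a ∈ M, ∀ b ∈ M, ξ = a + b → a = 0 ∨ b = 0}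

theorem mem_indecomposables_of_subset (hMN : M ⊆ N) (hξ : ξ ∈ M)
    (h : ξ ∈ indecomposables N) : ξ ∈ indecomposables M :=
  ⟨hξ, h.2.1, fun a ha b hb hab => h.2.2 a (hMN ha) b (hMN hb) hab⟩

theorem indecomposables_subset_of_saturated (hMN : M ⊆ N)
    (hsat : ∀ a ∈ N, ∀ b ∈ N, a + b ∈ M → a ∈ M) :
    indecomposables M ⊆ indecomposables N := by
  rintro ξ ⟨hξ, hne, hind⟩
  refine ⟨hMN hξ, hne, fun a ha b hb hab => hind a ?_ b ?_ hab⟩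
  · exact hsat a ha b hb (hab ▸ hξ)
  · exact hsat b hb a ha (add_comm a b ▸ hab ▸ hξ)

theorem vanishes_on_or_off_of_mem_indecomposables {T : Set ι}
    (hT : ∀ a ∈ M, T.indicator a ∈ M) (hTc : ∀ a ∈ M, Tᶜ.indicator a ∈ M)
    (hξ : ξ ∈ indecomposables M) : (∀ i ∈ T, ξ i = 0) ∨ ∀ i ∉ T, ξ i = 0 := by
  obtain ⟨hξM, -, hind⟩ := hξ
  rcases hind _ (hT ξ hξM) _ (hTc ξ hξM) (T.indicator_self_add_compl ξ).symm with h | h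
  · exact .inl fun i hi => by simpa [hi] using congrFun h i
  · exact .inr fun i hi => by simpa [hi] using congrFun h i

theorem nonneg_of_exists_natCast {x : ℚ} (h : ∃ m : ℕ, x = m) : 0 ≤ x := by
  obtain ⟨m, rfl⟩ := h
  exact m.cast_nonneg

variable [DecidableEq ι]

theorem single_mem_of_supportedIn {T : Set ι}
    (hTM : ∀ a : ι → ℚ, (∀ i, ∃ m : ℕ, a i = m) → (∀ i ∉ T, a i = 0) → a ∈ M)
    {i : ι} (hi : i ∈ T) : Pi.single i (1 : ℚ) ∈ M := by
  refine hTM _ (fun j => ?_) fun j hj => Pi.single_eq_of_ne (by rintro rfl; exact hj hi) _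
  by_cases hji : j = i
  · exact ⟨1, by simp [hji]⟩
  · exact ⟨0, by simp [hji]⟩

theorem eq_zero_of_add_eq_single (hM : ∀ a ∈ M, ∀ i, ∃ m : ℕ, a i = m) {a b : ι → ℚ}
    (ha : a ∈ M) (hb : b ∈ M) {i : ι} (hab : Pi.single i 1 = a + b) (hai : a i = 0) :
    a = 0 := by
  funext j
  by_cases hji : j = i
  · rw [hji, hai, Pi.zero_apply]
  · have hsum : a j + b j = 0 := by simpa [hji] using (congrFun hab j).symm
    exact ((add_eq_zero_iff_of_nonneg (nonneg_of_exists_natCast (hM a ha j))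
      (nonneg_of_exists_natCast (hM b hb j))).1 hsum).1

theorem single_mem_indecomposables (hM : ∀ a ∈ M, ∀ i, ∃ m : ℕ, a i = m) {i : ι}
    (hi : Pi.single i (1 : ℚ) ∈ M) : Pi.single i (1 : ℚ) ∈ indecomposables M := by
  refine ⟨hi, fun h => by simpa using congrFun h i, fun a ha b hb hab => ?_⟩
  obtain ⟨m, hm⟩ := hM a ha i
  obtain ⟨n, hn⟩ := hM b hb i
  have hmn : m + n = 1 := by
    have h := congrFun hab i
    simp only [Pi.single_eq_same, Pi.add_apply, hm, hn] at h
    exact_mod_cast h.symm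
  rcases Nat.add_eq_one_iff.1 hmn with ⟨rfl, -⟩ | ⟨-, rfl⟩
  · exact .inl (eq_zero_of_add_eq_single hM ha hb hab (by simpa using hm))
  · exact .inr (eq_zero_of_add_eq_single hM hb ha (hab.trans (add_comm a b)) (by simpa using hn))

theorem exists_single_eq_of_mem_indecomposables (hM : ∀ a ∈ M, ∀ i, ∃ m : ℕ, a i = m)
    {T : Set ι}
    (hTM : ∀ a : ι → ℚ, (∀ i, ∃ m : ℕ, a i = m) → (∀ i ∉ T, a i = 0) → a ∈ M)
    (hξ : ξ ∈ indecomposables M) (hsupp : ∀ i ∉ T, ξ i = 0) :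
    ∃ i ∈ T, Pi.single i 1 = ξ := by
  obtain ⟨hξM, hne, hind⟩ := hξ
  obtain ⟨i, hi⟩ : ∃ i, ξ i ≠ 0 := by
    by_contra! h
    exact hne (funext h)
  have hiT : i ∈ T := by
    by_contra h
    exact hi (hsupp i h)
  obtain ⟨m, hm⟩ := hM ξ hξM i
  have hm0 : m ≠ 0 := by
    rintro rfl
    exact hi (by simpa using hm)
  have hrest : ξ - Pi.single i 1 ∈ M := by
    refine hTM _ (fun j => ?_) fun j hj => ?_
    · by_cases hji : j = i
      · exact ⟨m - 1, by simp [hji, hm, Nat.cast_sub (Nat.one_le_iff_ne_zero.2 hm0)]⟩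
      · simpa [hji] using hM ξ hξM j
    · have hji : j ≠ i := by rintro rfl; exact hj hiT
      simp [hji, hsupp j hj]
  rcases hind _ (single_mem_of_supportedIn hTM hiT) _ hrest (add_sub_cancel _ _).symm with h | h
  · simpa using congrFun h i
  · exact ⟨i, hiT, (sub_eq_zero.1 h).symm⟩

end Indecomposables

section Localization

variable {ι κ : Type*} {ρ : κ → ι → ℚ}

theorem notMem_sigmaSetOn_of_forall_eq_zero {R : Finset ι} {D : Finset κ} {i : ι}
    (h : ∀ δ ∈ D, ρ δ i = 0) : i ∉ SigmaSetOn R ρ D := by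
  rintro ⟨-, cc, -, -, hpos⟩
  exact hpos.ne' (Finset.sum_eq_zero fun δ hδ => by rw [h δ hδ, mul_zero])

theorem phi_union_indicator_add [DecidableEq κ] {DA DB : Finset κ} (cc₁ cc₂ : κ → ℚ) :
    phi ρ (DA ∪ DB) ((DA : Set κ).indicator cc₁ + (DB : Set κ).indicator cc₂) =
      phi ρ DA cc₁ + phi ρ DB cc₂ := by
  funext i
  simp only [phi, Pi.add_apply, add_mul, Finset.sum_add_distrib]
  rw [← Finset.sum_indicator_subset (fun δ => cc₁ δ * ρ δ i) (t := DA ∪ DB)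
    Finset.subset_union_left, ← Finset.sum_indicator_subset (fun δ => cc₂ δ * ρ δ i)
    (t := DA ∪ DB) Finset.subset_union_right]
  simp only [Set.indicator_mul_left]

variable [Fintype ι]

theorem mem_semOn_univ_of_supportedIn {D : Finset κ} {T : Set ι}
    (hT : ∀ δ ∈ D, ∀ i ∈ T, ρ δ i = 0) {a : ι → ℚ} (hnat : ∀ i, ∃ m : ℕ, a i = m)
    (hsupp : ∀ i ∉ T, a i = 0) : a ∈ SemOn Finset.univ ρ D := by
  refine ⟨hnat, fun i hi => absurd (Finset.mem_univ i) hi,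
    fun δ hδ => Finset.sum_eq_zero fun i _ => ?_, fun i hi => ?_⟩
  · by_cases hiT : i ∈ T
    · rw [hT δ hδ i hiT, zero_mul]
    · rw [hsupp i hiT, mul_zero]
  · by_cases hiT : i ∈ T
    · exact absurd hi (notMem_sigmaSetOn_of_forall_eq_zero fun δ hδ => hT δ hδ i hiT)
    · exact hsupp i hiT

theorem indicator_mem_semOn_univ {D : Finset κ} {T : Set ι}
    (hT : ∀ δ ∈ D, (∀ i ∉ T, ρ δ i = 0) ∨ ∀ i ∈ T, ρ δ i = 0) {a : ι → ℚ}
    (ha : a ∈ SemOn Finset.univ ρ D) : T.indicator a ∈ SemOn Finset.univ ρ D := by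
  obtain ⟨hnat, -, hlin, hvan⟩ := ha
  refine ⟨fun i => ?_, fun i hi => absurd (Finset.mem_univ i) hi, fun δ hδ => ?_,
    fun i hi => by simp [hvan i hi]⟩
  · by_cases hi : i ∈ T
    · simpa [hi] using hnat i
    · exact ⟨0, by simp [hi]⟩
  · rcases hT δ hδ with hoff | hon
    · refine (Finset.sum_congr rfl fun i _ => ?_).trans (hlin δ hδ)
      by_cases hi : i ∈ T <;> simp [hi, hoff i]
    · refine Finset.sum_eq_zero fun i _ => ?_
      by_cases hi : i ∈ T <;> simp [hi, hon i]

theorem vanishes_on_or_off_of_mem_sigmaQuotOn_univ {D : Finset κ} {T : Set ι}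
    (hT : ∀ δ ∈ D, (∀ i ∉ T, ρ δ i = 0) ∨ ∀ i ∈ T, ρ δ i = 0) {ξ : ι → ℚ}
    (hξ : ξ ∈ SigmaQuotOn Finset.univ ρ D) : (∀ i ∈ T, ξ i = 0) ∨ ∀ i ∉ T, ξ i = 0 := by
  have hTc : ∀ δ ∈ D, (∀ i ∉ Tᶜ, ρ δ i = 0) ∨ ∀ i ∈ Tᶜ, ρ δ i = 0 := fun δ hδ => by
    simpa only [Set.mem_compl_iff, not_not, or_comm] using hT δ hδ
  exact vanishes_on_or_off_of_mem_indecomposables (fun _ => indicator_mem_semOn_univ hT)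
    (fun _ => indicator_mem_semOn_univ hTc) hξ

variable [DecidableEq κ] {A : Finset ι} {DA DB : Finset κ}

-- The witness for `i` is extended by the distinguishing functional of `DB`, which is
-- nonnegative on every spherical root.
theorem sigmaSetOn_subset_univ (hvA : ∀ δ ∈ DA, ∀ i ∉ A, ρ δ i = 0)
    (hdB : DistinguishedOn Finset.univ ρ DB) :
    SigmaSetOn A ρ DA ⊆ SigmaSetOn Finset.univ ρ (DA ∪ DB) := by
  rintro i ⟨hiA, cc₁, hpos₁, hge₁, hlt₁⟩
  obtain ⟨cc₂, hpos₂, hge₂⟩ := hdB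
  have hnonneg₁ : ∀ j, 0 ≤ phi ρ DA cc₁ j := fun j => by
    by_cases hj : j ∈ A
    · exact hge₁ j hj
    · exact (Finset.sum_eq_zero fun δ hδ => by rw [hvA δ hδ j hj, mul_zero]).ge
  have hind₁ : ∀ δ, 0 ≤ (DA : Set κ).indicator cc₁ δ :=
    Set.indicator_nonneg fun δ hδ => (hpos₁ δ hδ).le
  have hind₂ : ∀ δ, 0 ≤ (DB : Set κ).indicator cc₂ δ :=
    Set.indicator_nonneg fun δ hδ => (hpos₂ δ hδ).le
  refine ⟨Finset.mem_univ i, (DA : Set κ).indicator cc₁ + (DB : Set κ).indicator cc₂,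
    fun δ hδ => ?_, fun j _ => ?_, ?_⟩
  · rcases Finset.mem_union.1 hδ with hδA | hδB
    · exact add_pos_of_pos_of_nonneg
        (by simpa [Set.indicator_of_mem (Finset.mem_coe.2 hδA)] using hpos₁ δ hδA) (hind₂ δ)
    · exact add_pos_of_nonneg_of_pos (hind₁ δ)
        (by simpa [Set.indicator_of_mem (Finset.mem_coe.2 hδB)] using hpos₂ δ hδB)
  · rw [phi_union_indicator_add]
    exact add_nonneg (hnonneg₁ j) (hge₂ j (Finset.mem_univ j))
  · rw [phi_union_indicator_add]
    exact add_pos_of_pos_of_nonneg hlt₁ (hge₂ i (Finset.mem_univ i))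

theorem mem_sigmaSetOn_of_mem_univ (hBA : ∀ δ ∈ DB, ∀ i ∈ A, ρ δ i = 0) {i : ι}
    (hiA : i ∈ A) (hi : i ∈ SigmaSetOn Finset.univ ρ (DA ∪ DB)) : i ∈ SigmaSetOn A ρ DA := by
  obtain ⟨-, cc, hpos, hge, hlt⟩ := hi
  have hphi : ∀ j ∈ A, phi ρ DA cc j = phi ρ (DA ∪ DB) cc j := fun j hj =>
    Finset.sum_subset Finset.subset_union_left fun δ hδ hδA => by
      rw [hBA δ ((Finset.mem_union.1 hδ).resolve_left hδA) j hj, mul_zero]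
  exact ⟨hiA, cc, fun δ hδ => hpos δ (Finset.mem_union_left _ hδ),
    fun j hj => (hphi j hj).symm ▸ hge j (Finset.mem_univ j), (hphi i hiA).symm ▸ hlt⟩

theorem semOn_subset_univ (hBA : ∀ δ ∈ DB, ∀ i ∈ A, ρ δ i = 0) :
    SemOn A ρ DA ⊆ SemOn Finset.univ ρ (DA ∪ DB) := by
  rintro a ⟨hnat, hsupp, hlin, hvan⟩
  refine ⟨hnat, fun i hi => absurd (Finset.mem_univ i) hi, fun δ hδ => ?_, fun i hi => ?_⟩
  · rcases Finset.mem_union.1 hδ with hδA | hδB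
    · exact hlin δ hδA
    · refine Finset.sum_eq_zero fun i _ => ?_
      by_cases hiA : i ∈ A
      · rw [hBA δ hδB i hiA, zero_mul]
      · rw [hsupp i hiA, mul_zero]
  · by_cases hiA : i ∈ A
    · exact hvan i (mem_sigmaSetOn_of_mem_univ hBA hiA hi)
    · exact hsupp i hiA

theorem mem_semOn_of_add_mem {a b : ι → ℚ} (ha : a ∈ SemOn Finset.univ ρ (DA ∪ DB))
    (hb : b ∈ SemOn Finset.univ ρ (DA ∪ DB)) (hab : a + b ∈ SemOn A ρ DA) :
    a ∈ SemOn A ρ DA := by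
  obtain ⟨hanat, -, halin, -⟩ := ha
  obtain ⟨-, hsupp, -, hvan⟩ := hab
  have hzero : ∀ i, (a + b) i = 0 → a i = 0 := fun i h =>
    ((add_eq_zero_iff_of_nonneg (nonneg_of_exists_natCast (hanat i))
      (nonneg_of_exists_natCast (hb.1 i))).1 h).1
  exact ⟨hanat, fun i hi => hzero i (hsupp i hi),
    fun δ hδ => halin δ (Finset.mem_union_left _ hδ), fun i hi => hzero i (hvan i hi)⟩

theorem sigmaQuotOn_subset_univ (hBA : ∀ δ ∈ DB, ∀ i ∈ A, ρ δ i = 0) :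
    SigmaQuotOn A ρ DA ⊆ SigmaQuotOn Finset.univ ρ (DA ∪ DB) :=
  indecomposables_subset_of_saturated (semOn_subset_univ hBA)
    fun _ ha _ hb => mem_semOn_of_add_mem ha hb

theorem mem_sigmaQuotOn_of_mem_univ (hvA : ∀ δ ∈ DA, ∀ i ∉ A, ρ δ i = 0)
    (hBA : ∀ δ ∈ DB, ∀ i ∈ A, ρ δ i = 0) (hdB : DistinguishedOn Finset.univ ρ DB)
    {ξ : ι → ℚ} (hξ : ξ ∈ SigmaQuotOn Finset.univ ρ (DA ∪ DB)) (hsupp : ∀ i ∉ A, ξ i = 0) :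
    ξ ∈ SigmaQuotOn A ρ DA := by
  obtain ⟨hnat, -, hlin, hvan⟩ := hξ.1
  exact mem_indecomposables_of_subset (semOn_subset_univ hBA)
    ⟨hnat, hsupp, fun δ hδ => hlin δ (Finset.mem_union_left _ hδ),
      fun i hi => hvan i (sigmaSetOn_subset_univ hvA hdB hi)⟩ hξ

end Localization

theorem sigmaQuot_of_union_general
    (moves : Δ → Finset S) (suppRoot : σ → Finset S) (ρ : Δ → σ → ℚ)
    (Sig1 Sig2 : Finset σ) (D1 D2 : Finset Δ)
    (hdisj : Disjoint Sig1 Sig2)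
    (hD1 : ↑D1 ⊆ DeltaOf moves suppRoot ρ Sig1)
    (hD2 : ↑D2 ⊆ DeltaOf moves suppRoot ρ Sig2)
    (hd1 : DistinguishedOn Finset.univ ρ D1)
    (hd2 : DistinguishedOn Finset.univ ρ D2) :
    SigmaQuotOn Finset.univ ρ (D1 ∪ D2) =
      (dualBasisVec '' {i : σ | i ∉ Sig1 ∧ i ∉ Sig2}) ∪
        SigmaQuotOn Sig1 ρ D1 ∪ SigmaQuotOn Sig2 ρ D2 := by
  have hv1 : ∀ δ ∈ D1, ∀ i ∉ Sig1, ρ δ i = 0 := fun δ hδ => (hD1 hδ).2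
  have hv2 : ∀ δ ∈ D2, ∀ i ∉ Sig2, ρ δ i = 0 := fun δ hδ => (hD2 hδ).2
  have hv12 : ∀ δ ∈ D1, ∀ i ∈ Sig2, ρ δ i = 0 := fun δ hδ i hi =>
    hv1 δ hδ i (Finset.disjoint_right.1 hdisj hi)
  have hv21 : ∀ δ ∈ D2, ∀ i ∈ Sig1, ρ δ i = 0 := fun δ hδ i hi =>
    hv2 δ hδ i (Finset.disjoint_left.1 hdisj hi)
  have hnat : ∀ a ∈ SemOn Finset.univ ρ (D1 ∪ D2), ∀ i, ∃ m : ℕ, a i = m := fun _ ha => ha.1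
  have hout : ∀ a : σ → ℚ, (∀ i, ∃ m : ℕ, a i = m) →
      (∀ i ∉ {i | i ∉ Sig1 ∧ i ∉ Sig2}, a i = 0) → a ∈ SemOn Finset.univ ρ (D1 ∪ D2) :=
    fun _ => mem_semOn_univ_of_supportedIn fun δ hδ i hi =>
      (Finset.mem_union.1 hδ).elim (hv1 δ · i hi.1) (hv2 δ · i hi.2)
  ext ξ
  constructor
  · intro hξ
    rcases vanishes_on_or_off_of_mem_sigmaQuotOn_univ (T := ↑Sig1)
      (fun δ hδ => (Finset.mem_union.1 hδ).imp (hv1 δ) (hv21 δ)) hξ with h1 | h1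
    · rcases vanishes_on_or_off_of_mem_sigmaQuotOn_univ (T := ↑Sig2)
        (fun δ hδ => (Finset.mem_union.1 hδ).symm.imp (hv2 δ) (hv12 δ)) hξ with h2 | h2
      · refine .inl (.inl (exists_single_eq_of_mem_indecomposables hnat hout hξ fun i hi => ?_))
        rcases not_and_or.1 hi with hi₁ | hi₂
        · exact h1 i (Finset.mem_coe.2 (not_not.1 hi₁))
        · exact h2 i (Finset.mem_coe.2 (not_not.1 hi₂))
      · rw [Finset.union_comm] at hξ
        exact .inr (mem_sigmaQuotOn_of_mem_univ hv2 hv12 hd1 hξ h2)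
    · exact .inl (.inr (mem_sigmaQuotOn_of_mem_univ hv1 hv21 hd2 hξ h1))
  · rintro ((⟨i, hi, rfl⟩ | hξ) | hξ)
    · exact single_mem_indecomposables hnat (single_mem_of_supportedIn hout hi)
    · exact sigmaQuotOn_subset_univ hv21 hξ
    · rw [Finset.union_comm]
      exact sigmaQuotOn_subset_univ hv12 hξ

theorem sigmaQuot_of_union
    (moves : Δ → Finset S) (suppRoot : σ → Finset S) (ρ : Δ → σ → ℚ)
    (Sig1 Sig2 : Finset σ) (D1 D2 : Finset Δ)
    (hdisj : Disjoint Sig1 Sig2)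
    (hD1 : ↑D1 ⊆ DeltaOf moves suppRoot ρ Sig1)
    (hD2 : ↑D2 ⊆ DeltaOf moves suppRoot ρ Sig2)
    (hd1 : DistinguishedOn Finset.univ ρ D1)
    (hd2 : DistinguishedOn Finset.univ ρ D2)
    (hs1 : StarOn Sig1 ρ D1) (hs2 : StarOn Sig2 ρ D2) :
    SigmaQuotOn Finset.univ ρ (D1 ∪ D2) =
      (dualBasisVec '' {i : σ | i ∉ Sig1 ∧ i ∉ Sig2}) ∪
        SigmaQuotOn Sig1 ρ D1 ∪ SigmaQuotOn Sig2 ρ D2 :=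
  sigmaQuot_of_union_general moves suppRoot ρ Sig1 Sig2 D1 D2 hdisj hD1 hD2 hd1 hd2

end Stmt19
end
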